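/- arXiv:2601.02940 — 4 statements merged into one kernel-verified Lean document; each statement's English description precedes it below -/
import Mathlib

section
/- Let ρ : G →* (V ≃ₗ[ℂ] V) be a representation of a group G on a complex vector space V. For a character χ : G →* ℂˣ, let V_χ = {v ∈ V : ∀ g ∈ G, ρ(g) v = χ(g) • v} be the χ-eigenspace (a ℂ-submodule of V). Then there is a bijection between the set of fixed points of the induced G-action on the projectivization, namely {x ∈ ℙ(ℂ, V) : ∀ g ∈ G, (x.submodule).map(ρ g) = x.submodule}, and the disjoint union (sigma type) Σ (χ : G →* ℂˣ), ℙ(ℂ, V_χ), given by regarding a line in an eigenspace V_χ as a line in V. -/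
/-- The `χ`-eigenspace of a representation `ρ : G →* (V ≃ₗ[ℂ] V)`, for a character
`χ : G →* ℂˣ`: the submodule of vectors on which every `g ∈ G` acts by the scalar `χ g`. -/
def eigSpace {G V : Type*} [Group G] [AddCommGroup V] [Module ℂ V]
    (ρ : G →* (V ≃ₗ[ℂ] V)) (χ : G →* ℂˣ) : Submodule ℂ V where
  carrier := {v | ∀ g : G, ρ g v = (χ g : ℂ) • v}
  add_mem' := by
    intro a b ha hb g
    simp [map_add, ha g, hb g, smul_add]
  zero_mem' := by
    intro g
    simp
  smul_mem' := by
    intro c v hv g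
    simp [map_smul, hv g, smul_comm c]

open scoped LinearAlgebra.Projectivization

open Projectivization in
lemma submodule_map_aux {K V W : Type*} [DivisionRing K] [AddCommGroup V] [Module K V]
    [AddCommGroup W] [Module K W] (f : V →ₗ[K] W) (hf : Function.Injective f)
    (y : ℙ K V) : (Projectivization.map f hf y).submodule = y.submodule.map f := by
  induction' y using Projectivization.ind with v hv
  rw [Projectivization.map_mk, submodule_mk, submodule_mk, Submodule.map_span,
    Set.image_singleton]

/-- The fixed points of the `G`-action on the projectivization `ℙ(ℂ, V)` are in bijection
with the disjoint union, over characters `χ : G →* ℂˣ`, of the projectivizations of the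
`χ`-eigenspaces; the bijection regards a line in an eigenspace `V_χ` as a line in `V`. -/
theorem fixedPoints_projectivization_equiv_sigma_eigenspaces
    {G V : Type*} [Group G] [AddCommGroup V] [Module ℂ V]
    (ρ : G →* (V ≃ₗ[ℂ] V)) :
    ∃ e : (Σ χ : G →* ℂˣ, ℙ ℂ (eigSpace ρ χ)) ≃
        {x : ℙ ℂ V // ∀ g : G, x.submodule.map (ρ g).toLinearMap = x.submodule},
      ∀ (χ : G →* ℂˣ) (y : ℙ ℂ (eigSpace ρ χ)),
        ((e ⟨χ, y⟩ : {x : ℙ ℂ V // ∀ g : G,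
            x.submodule.map (ρ g).toLinearMap = x.submodule}) : ℙ ℂ V).submodule =
          y.submodule.map (eigSpace ρ χ).subtype := by
  classical
  -- forward map
  have hinj : ∀ χ : G →* ℂˣ, Function.Injective (eigSpace ρ χ).subtype :=
    fun χ => Subtype.val_injective
  set f : (Σ χ : G →* ℂˣ, ℙ ℂ (eigSpace ρ χ)) →
      {x : ℙ ℂ V // ∀ g : G, x.submodule.map (ρ g).toLinearMap = x.submodule} :=
    fun p => ⟨Projectivization.map (eigSpace ρ p.1).subtype (hinj p.1) p.2, by
      intro g
      induction' p.2 using Projectivization.ind with v hv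
      rw [Projectivization.map_mk, Projectivization.submodule_mk, Submodule.map_span,
        Set.image_singleton]
      have hev : ρ g (v : V) = (p.1 g : ℂ) • (v : V) := v.2 g
      simp only [Submodule.subtype_apply, LinearEquiv.coe_coe, hev,
        Submodule.span_singleton_smul_eq (Units.isUnit (p.1 g))]⟩ with hf
  have hfsub : ∀ (χ : G →* ℂˣ) (y : ℙ ℂ (eigSpace ρ χ)),
      ((f ⟨χ, y⟩ : _) : ℙ ℂ V).submodule = y.submodule.map (eigSpace ρ χ).subtype := by
    intro χ y
    exact submodule_map_aux (eigSpace ρ χ).subtype (hinj χ) y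
  have hbij : Function.Bijective f := by
    constructor
    · rintro ⟨χ, y⟩ ⟨χ', y'⟩ h
      have h' : Projectivization.map (eigSpace ρ χ).subtype (hinj χ) y =
          Projectivization.map (eigSpace ρ χ').subtype (hinj χ') y' := congrArg Subtype.val h
      -- extract representatives
      induction' y using Projectivization.ind with v hv
      induction' y' using Projectivization.ind with w hw
      rw [Projectivization.map_mk, Projectivization.map_mk,
        Projectivization.mk_eq_mk_iff'] at h'
      obtain ⟨a, ha⟩ := h'
      simp only [Submodule.subtype_apply] at ha
      -- ha : a • (w : V) = (v : V)
      have hvV : (v : V) ≠ 0 := fun h0 => hv (Subtype.ext h0)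
      have hχ : χ = χ' := by
        ext g
        have h1 : ρ g (v : V) = (χ g : ℂ) • (v : V) := v.2 g
        have h2 : ρ g (w : V) = (χ' g : ℂ) • (w : V) := w.2 g
        have h3 : (χ g : ℂ) • (v : V) = (χ' g : ℂ) • (v : V) := by
          rw [← h1, ← ha, map_smul, h2, smul_comm]
        exact smul_left_injective ℂ hvV h3
      subst hχ
      have hy : Projectivization.mk ℂ v hv = Projectivization.mk ℂ w hw := by
        rw [Projectivization.mk_eq_mk_iff']
        exact ⟨a, Subtype.ext (by simpa using ha)⟩
      rw [hy]
    · rintro ⟨x, hx⟩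
      set v := x.rep with hv
      have hvne : v ≠ 0 := x.rep_nonzero
      have hmem : ∀ g : G, ρ g v ∈ Submodule.span ℂ {v} := by
        intro g
        have : ρ g v ∈ x.submodule.map (ρ g).toLinearMap :=
          ⟨v, by rw [x.submodule_eq]; exact Submodule.mem_span_singleton_self v, rfl⟩
        rw [hx g, x.submodule_eq] at this
        exact this
      choose c hc using fun g => (Submodule.mem_span_singleton).1 (hmem g)
      -- hc : c g • v = ρ g v
      have hcne : ∀ g, c g ≠ 0 := by
        intro g h0
        apply hvne
        have := hc g
        rw [h0, zero_smul] at this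
        exact (ρ g).injective (by simpa using this.symm)
      have huniq : ∀ (a b : ℂ), a • v = b • v → a = b := fun a b h =>
        smul_left_injective ℂ hvne h
      set χ : G →* ℂˣ :=
        { toFun := fun g => Units.mk0 (c g) (hcne g)
          map_one' := by
            ext
            refine huniq _ _ ?_
            simp only [Units.val_mk0, Units.val_one, one_smul, hc 1, map_one]
            rfl
          map_mul' := by
            intro g h
            ext
            refine huniq _ _ ?_
            simp only [Units.val_mk0, Units.val_mul]
            have key : ρ (g * h) v = c h • (c g • v) := by
              rw [map_mul]
              show ρ g (ρ h v) = _
              rw [← hc h, map_smul, ← hc g]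
            rw [hc (g * h), key, smul_smul, mul_comm] } with hχ
      have hvmem : v ∈ eigSpace ρ χ := by
        intro g
        exact (hc g).symm
      have hne : (⟨v, hvmem⟩ : eigSpace ρ χ) ≠ 0 :=
        fun h0 => hvne (congrArg Subtype.val h0)
      refine ⟨⟨χ, Projectivization.mk ℂ ⟨v, hvmem⟩ hne⟩, Subtype.ext ?_⟩
      show Projectivization.map (eigSpace ρ χ).subtype (hinj χ)
        (Projectivization.mk ℂ ⟨v, hvmem⟩ hne) = x
      rw [Projectivization.map_mk]
      exact x.mk_rep
  exact ⟨Equiv.ofBijective f hbij, hfsub⟩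
end

section
/- Let ρ : G →* (V ≃ₗ[ℂ] V) be a representation of a group G on a complex vector space V, with χ-eigenspaces V_χ = {v : ∀ g, ρ(g) v = χ(g) • v} for characters χ : G →* ℂˣ. Assume the eigenspaces span V, i.e. ⨆_{χ : G →* ℂˣ} V_χ = ⊤. Then every G-invariant submodule W of V (one with W.map(ρ g) = W for all g ∈ G) decomposes compatibly: W = ⨆_{χ : G →* ℂˣ} (W ⊓ V_χ). -/
/-- Key lemma: if a sum of eigenvectors of distinct characters lies in an invariant
submodule `W`, then each summand lies in `W`. -/
lemma eig_components_mem {G V : Type*} [Group G] [AddCommGroup V] [Module ℂ V]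
    (ρ : G →* (V ≃ₗ[ℂ] V)) (W : Submodule ℂ V)
    (hW : ∀ g : G, W.map (ρ g).toLinearMap = W)
    (S : Finset (G →* ℂˣ)) (v : (G →* ℂˣ) → V)
    (hv : ∀ χ ∈ S, v χ ∈ eigSpace ρ χ) (hsum : (∑ χ ∈ S, v χ) ∈ W) :
    ∀ χ ∈ S, v χ ∈ W := by
  classical
  have hmem : ∀ g : G, ∀ w ∈ W, ρ g w ∈ W := by
    intro g w hw
    rw [← hW g]
    exact ⟨w, hw, rfl⟩
  induction S using Finset.induction_on generalizing v with
  | empty => intro χ hχ; simp at hχ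
  | @insert χ₀ T hχ₀T ih =>
    intro χ hχ
    rw [Finset.sum_insert hχ₀T] at hsum
    -- first show v χ' ∈ W for every χ' ∈ T
    have hT : ∀ χ' ∈ T, v χ' ∈ W := by
      intro χ' hχ'
      have hne : χ' ≠ χ₀ := fun h => hχ₀T (h ▸ hχ')
      obtain ⟨g, hg⟩ : ∃ g : G, χ' g ≠ χ₀ g := by
        by_contra h
        push_neg at h
        exact hne (MonoidHom.ext h)
      -- apply A = ρ g - χ₀ g • id to the sum
      set w := v χ₀ + ∑ χ'' ∈ T, v χ'' with hwdef
      have hAw : ρ g w - (χ₀ g : ℂ) • w ∈ W :=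
        W.sub_mem (hmem g w hsum) (W.smul_mem _ hsum)
      have hcomp : ρ g w - (χ₀ g : ℂ) • w
          = ∑ χ'' ∈ T, (((χ'' g : ℂ) - (χ₀ g : ℂ)) • v χ'') := by
        have h0 : ρ g (v χ₀) = (χ₀ g : ℂ) • v χ₀ := hv χ₀ (Finset.mem_insert_self _ _) g
        rw [hwdef, map_add, map_sum, smul_add, Finset.smul_sum, h0]
        rw [add_sub_add_comm, sub_self, zero_add, ← Finset.sum_sub_distrib]
        refine Finset.sum_congr rfl fun χ'' hχ'' => ?_
        rw [hv χ'' (Finset.mem_insert_of_mem hχ'') g, sub_smul]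
      rw [hcomp] at hAw
      have := ih (fun χ'' => ((χ'' g : ℂ) - (χ₀ g : ℂ)) • v χ'')
        (fun χ'' hχ'' => Submodule.smul_mem _ _ (hv χ'' (Finset.mem_insert_of_mem hχ'')))
        hAw χ' hχ'
      have hc : ((χ' g : ℂ) - (χ₀ g : ℂ)) ≠ 0 := by
        intro h
        apply hg
        have : (χ' g : ℂ) = (χ₀ g : ℂ) := by linear_combination h
        exact Units.ext this
      have := W.smul_mem ((χ' g : ℂ) - (χ₀ g : ℂ))⁻¹ this
      rwa [smul_smul, inv_mul_cancel₀ hc, one_smul] at this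
    rcases Finset.mem_insert.mp hχ with rfl | hχT
    · have hsumT : (∑ χ'' ∈ T, v χ'') ∈ W := W.sum_mem fun χ'' h => hT χ'' h
      have := W.sub_mem hsum hsumT
      rwa [add_sub_cancel_right] at this
    · exact hT χ hχT

/-- If the character eigenspaces of a representation span `V`, then every `G`-invariant
submodule `W` is the supremum of its intersections with the eigenspaces. -/
theorem invariant_submodule_eq_iSup_inf_eigenspaces
    {G V : Type*} [Group G] [AddCommGroup V] [Module ℂ V]
    (ρ : G →* (V ≃ₗ[ℂ] V))
    (hspan : (⨆ χ : G →* ℂˣ, eigSpace ρ χ) = ⊤)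
    (W : Submodule ℂ V) (hW : ∀ g : G, W.map (ρ g).toLinearMap = W) :
    W = ⨆ χ : G →* ℂˣ, W ⊓ eigSpace ρ χ := by
  refine le_antisymm ?_ (iSup_le fun χ => inf_le_left)
  intro w hw
  have : w ∈ ⨆ χ : G →* ℂˣ, eigSpace ρ χ := hspan ▸ Submodule.mem_top
  obtain ⟨f, hf, rfl⟩ := (Submodule.mem_iSup_iff_exists_finsupp _ _).mp this
  have hW' : ∀ χ ∈ f.support, f χ ∈ W :=
    eig_components_mem ρ W hW f.support f (fun χ _ => hf χ) (by simpa [Finsupp.sum] using hw)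
  rw [Finsupp.sum]
  refine Submodule.sum_mem _ fun χ hχ => Submodule.mem_iSup_of_mem χ ?_
  exact ⟨hW' χ hχ, hf χ⟩
end

section
/- Let ρ : G →* (V ≃ₗ[ℂ] V) be a representation of a group G on a finite-dimensional complex vector space V, with χ-eigenspaces V_χ = {v : ∀ g, ρ(g) v = χ(g) • v}, and assume ⨆_{χ : G →* ℂˣ} V_χ = ⊤. Fix n ∈ ℕ. Then the map W ↦ (χ ↦ W ⊓ V_χ) is a bijection from the set {W : Submodule ℂ V | (∀ g, W.map(ρ g) = W) ∧ finrank W = n} of G-invariant n-dimensional subspaces of V onto the set of families {f : (G →* ℂˣ) → Submodule ℂ V | (∀ χ, f χ ≤ V_χ) ∧ ∑ᶠ χ, finrank (f χ) = n}, with inverse f ↦ ⨆_χ f χ. -/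
section Aux

variable {G V : Type*} [Group G] [AddCommGroup V] [Module ℂ V]
variable (ρ : G →* (V ≃ₗ[ℂ] V))

lemma mem_eigSpace_iff {χ : G →* ℂˣ} {v : V} :
    v ∈ eigSpace ρ χ ↔ ∀ g : G, ρ g v = (χ g : ℂ) • v := Iff.rfl

lemma exists_coe_ne {χ₁ χ₂ : G →* ℂˣ} (h : χ₁ ≠ χ₂) :
    ∃ g : G, (χ₁ g : ℂ) ≠ (χ₂ g : ℂ) := by
  by_contra hc
  push_neg at hc
  exact h (MonoidHom.ext fun g => Units.ext (hc g))

/-- A vector in `V_χ` which is a sum of vectors from eigenspaces of other characters is `0`. -/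
lemma eig_vanish (s : Finset (G →* ℂˣ)) :
    ∀ χ : G →* ℂˣ, χ ∉ s → ∀ f : (G →* ℂˣ) → V,
      (∀ χ' ∈ s, f χ' ∈ eigSpace ρ χ') → ∀ v ∈ eigSpace ρ χ,
      v = ∑ χ' ∈ s, f χ' → v = 0 := by
  classical
  induction s using Finset.induction_on with
  | empty => intro χ _ f _ v _ hv; simpa using hv
  | @insert a t ha ih =>
    intro χ hχ f hf v hvχ hv
    have hχa : χ ≠ a := fun h => hχ (h ▸ Finset.mem_insert_self a t)
    have hχt : χ ∉ t := fun h => hχ (Finset.mem_insert_of_mem h)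
    obtain ⟨g, hg⟩ := exists_coe_ne hχa
    set c : ℂ := (χ g : ℂ) - (a g : ℂ) with hc
    have hc0 : c ≠ 0 := sub_ne_zero_of_ne hg
    have hv' : v = f a + ∑ χ' ∈ t, f χ' := by rw [hv, Finset.sum_insert ha]
    have h2 : ρ g v = (a g : ℂ) • f a + ∑ χ' ∈ t, (χ' g : ℂ) • f χ' := by
      rw [hv', map_add, map_sum, hf a (Finset.mem_insert_self a t) g]
      congr 1
      exact Finset.sum_congr rfl fun χ' hχ' => hf χ' (Finset.mem_insert_of_mem hχ') g
    have key : c • v = ∑ χ' ∈ t, ((χ' g : ℂ) - (a g : ℂ)) • f χ' := by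
      have h1 : ρ g v = (χ g : ℂ) • v := hvχ g
      calc c • v = ρ g v - (a g : ℂ) • v := by rw [h1, hc, sub_smul]
        _ = ((a g : ℂ) • f a + ∑ χ' ∈ t, (χ' g : ℂ) • f χ')
              - (a g : ℂ) • (f a + ∑ χ' ∈ t, f χ') := by rw [h2, ← hv']
        _ = ∑ χ' ∈ t, ((χ' g : ℂ) - (a g : ℂ)) • f χ' := by
              simp only [smul_add, Finset.smul_sum, sub_smul, Finset.sum_sub_distrib]
              abel
    have h0 : c • v = 0 :=
      ih χ hχt (fun χ' => ((χ' g : ℂ) - (a g : ℂ)) • f χ')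
        (fun χ' h' => Submodule.smul_mem _ _ (hf χ' (Finset.mem_insert_of_mem h')))
        (c • v) (Submodule.smul_mem _ _ hvχ) key
    rcases smul_eq_zero.mp h0 with h | h
    · exact absurd h hc0
    · exact h

/-- Any element of a `G`-invariant subspace `W` which lies in a finite sum of eigenspaces
lies in `⨆ χ, W ⊓ V_χ`. -/
lemma mem_iSup_inf_of_invariant (W : Submodule ℂ V)
    (hW : ∀ g : G, W.map (ρ g).toLinearMap = W) (s : Finset (G →* ℂˣ)) :
    ∀ f : (G →* ℂˣ) → V, (∀ χ ∈ s, f χ ∈ eigSpace ρ χ) →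
      ∀ w ∈ W, w = ∑ χ ∈ s, f χ → w ∈ ⨆ χ : G →* ℂˣ, (W ⊓ eigSpace ρ χ) := by
  classical
  induction s using Finset.strongInduction with
  | _ s ih =>
    intro f hf w hw hsum
    by_cases hcard : ∃ χ₁ ∈ s, ∃ χ₂ ∈ s, χ₁ ≠ χ₂
    · obtain ⟨χ₁, h₁, χ₂, h₂, hne⟩ := hcard
      obtain ⟨g, hg⟩ := exists_coe_ne hne
      have hρg : ∀ u ∈ W, ρ g u ∈ W := fun u hu => by
        have := Submodule.mem_map_of_mem (f := (ρ g).toLinearMap) hu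
        rwa [hW g] at this
      have hρw : ρ g w = ∑ χ ∈ s, (χ g : ℂ) • f χ := by
        rw [hsum, map_sum]
        exact Finset.sum_congr rfl fun χ hχ => hf χ hχ g
      have keyc : ∀ χ₀ ∈ s, ρ g w - (χ₀ g : ℂ) • w
          = ∑ χ ∈ s.erase χ₀, ((χ g : ℂ) - (χ₀ g : ℂ)) • f χ := by
        intro χ₀ hχ₀
        rw [hρw, hsum, Finset.smul_sum]
        rw [← Finset.sum_sub_distrib]
        rw [Finset.sum_erase _ (by simp)]
        exact Finset.sum_congr rfl fun χ _ => by rw [sub_smul]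
      have hw₁ : ρ g w - (χ₁ g : ℂ) • w ∈ ⨆ χ : G →* ℂˣ, (W ⊓ eigSpace ρ χ) :=
        ih (s.erase χ₁) (Finset.erase_ssubset h₁)
          (fun χ => ((χ g : ℂ) - (χ₁ g : ℂ)) • f χ)
          (fun χ hχ => Submodule.smul_mem _ _ (hf χ (Finset.mem_of_mem_erase hχ)))
          _ (sub_mem (hρg w hw) (Submodule.smul_mem _ _ hw)) (keyc χ₁ h₁)
      have hw₂ : ρ g w - (χ₂ g : ℂ) • w ∈ ⨆ χ : G →* ℂˣ, (W ⊓ eigSpace ρ χ) :=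
        ih (s.erase χ₂) (Finset.erase_ssubset h₂)
          (fun χ => ((χ g : ℂ) - (χ₂ g : ℂ)) • f χ)
          (fun χ hχ => Submodule.smul_mem _ _ (hf χ (Finset.mem_of_mem_erase hχ)))
          _ (sub_mem (hρg w hw) (Submodule.smul_mem _ _ hw)) (keyc χ₂ h₂)
      have hdiff : (ρ g w - (χ₂ g : ℂ) • w) - (ρ g w - (χ₁ g : ℂ) • w)
          = ((χ₁ g : ℂ) - (χ₂ g : ℂ)) • w := by
        rw [sub_smul]; abel
      have hc0 : ((χ₁ g : ℂ) - (χ₂ g : ℂ)) ≠ 0 := sub_ne_zero_of_ne hg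
      have hmem : ((χ₁ g : ℂ) - (χ₂ g : ℂ)) • w ∈ ⨆ χ : G →* ℂˣ, (W ⊓ eigSpace ρ χ) :=
        hdiff ▸ sub_mem hw₂ hw₁
      have := Submodule.smul_mem _ ((χ₁ g : ℂ) - (χ₂ g : ℂ))⁻¹ hmem
      rwa [smul_smul, inv_mul_cancel₀ hc0, one_smul] at this
    · push_neg at hcard
      rcases Finset.eq_empty_or_nonempty s with rfl | ⟨χ, hχ⟩
      · simp only [Finset.sum_empty] at hsum
        rw [hsum]; exact Submodule.zero_mem _
      · have hs : s = {χ} := by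
          apply Finset.eq_singleton_iff_unique_mem.mpr
          exact ⟨hχ, fun χ' hχ' => hcard χ' hχ' χ hχ⟩
        subst hs
        rw [Finset.sum_singleton] at hsum
        exact Submodule.mem_iSup_of_mem χ
          (Submodule.mem_inf.mpr ⟨hw, hsum ▸ hf χ (Finset.mem_singleton_self χ)⟩)

/-- The eigenspaces form an independent family of submodules. -/
lemma eig_iSupIndep : iSupIndep (eigSpace ρ) := by
  classical
  intro χ
  rw [Submodule.disjoint_def]
  intro v hv hv'
  rw [iSup_subtype'] at hv'
  obtain ⟨F, hF, hFsum⟩ := (Submodule.mem_iSup_iff_exists_finsupp _ _).mp hv'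
  set s : Finset (G →* ℂˣ) := F.support.image Subtype.val with hs
  refine eig_vanish ρ s χ ?_ (fun χ' => if h : χ' = χ then 0 else F ⟨χ', h⟩) ?_ v hv ?_
  · intro hmem
    obtain ⟨j, _, hj⟩ := Finset.mem_image.mp hmem
    exact j.2 hj
  · intro χ' hχ'
    obtain ⟨j, _, hj⟩ := Finset.mem_image.mp hχ'
    beta_reduce
    rw [dif_neg (hj ▸ j.2)]
    exact hF ⟨χ', hj ▸ j.2⟩
  · rw [← hFsum]
    rw [hs, Finset.sum_image (fun a _ b _ h => Subtype.ext h)]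
    refine (Finset.sum_congr rfl fun j _ => ?_).symm
    beta_reduce
    rw [dif_neg j.2]

section FinDim

variable [FiniteDimensional ℂ V]

lemma finrank_finset_sup {ι : Type*} (p : ι → Submodule ℂ V) (hp : iSupIndep p)
    (s : Finset ι) :
    Module.finrank ℂ (s.sup p : Submodule ℂ V) = ∑ i ∈ s, Module.finrank ℂ (p i) := by
  classical
  induction s using Finset.induction_on with
  | empty => simp
  | @insert a t ha ih =>
    have hle : t.sup p ≤ ⨆ (j) (_ : j ≠ a), p j :=
      Finset.sup_le fun j hj => le_iSup_of_le j (le_iSup_of_le (fun h => ha (h ▸ hj)) le_rfl)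
    have hd : Disjoint (p a) (t.sup p) := (hp a).mono_right hle
    have := Submodule.finrank_sup_add_finrank_inf_eq (p a) (t.sup p)
    rw [hd.eq_bot] at this
    simp only [finrank_bot, add_zero] at this
    rw [Finset.sup_insert, Finset.sum_insert ha, this, ih]

lemma finsum_finrank_eq (f : (G →* ℂˣ) → Submodule ℂ V)
    (hf : ∀ χ, f χ ≤ eigSpace ρ χ) :
    ∑ᶠ χ : G →* ℂˣ, Module.finrank ℂ (f χ)
      = Module.finrank ℂ (⨆ χ : G →* ℂˣ, f χ : Submodule ℂ V) := by
  classical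
  have hind : iSupIndep f := (eig_iSupIndep ρ).mono hf
  haveI : Fintype {χ : G →* ℂˣ // f χ ≠ ⊥} := hind.fintypeNeBotOfFiniteDimensional
  haveI : Fintype ({χ : G →* ℂˣ | f χ ≠ ⊥} : Set _) := ‹_›
  set s : Finset (G →* ℂˣ) := {χ : G →* ℂˣ | f χ ≠ ⊥}.toFinset with hs
  have hsup : (⨆ χ : G →* ℂˣ, f χ) = s.sup f := by
    apply le_antisymm
    · refine iSup_le fun χ => ?_
      by_cases h : f χ = ⊥
      · rw [h]; exact bot_le
      · exact Finset.le_sup (by simp [hs, h])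
    · exact Finset.sup_le fun χ _ => le_iSup f χ
  rw [hsup, finrank_finset_sup f hind s]
  refine finsum_eq_finset_sum_of_support_subset _ fun χ hχ => ?_
  simp only [Function.mem_support] at hχ
  rw [Finset.mem_coe, hs, Set.mem_toFinset, Set.mem_setOf_eq]
  intro h
  rw [h] at hχ
  simp at hχ

end FinDim

lemma map_eq_self_of_le_eig {f : Submodule ℂ V} {χ : G →* ℂˣ}
    (hf : f ≤ eigSpace ρ χ) (g : G) : f.map (ρ g).toLinearMap = f := by
  apply le_antisymm
  · rintro _ ⟨v, hv, rfl⟩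
    show ρ g v ∈ f
    rw [hf hv g]
    exact f.smul_mem _ hv
  · intro v hv
    refine ⟨((χ g)⁻¹ : ℂˣ) • v, f.smul_mem _ hv, ?_⟩
    show ρ g ((((χ g)⁻¹ : ℂˣ) : ℂ) • v) = v
    rw [map_smul, hf hv g, smul_smul, Units.inv_mul, one_smul]

lemma invariant_eq_iSup_inf (hspan : (⨆ χ : G →* ℂˣ, eigSpace ρ χ) = ⊤)
    (W : Submodule ℂ V) (hW : ∀ g : G, W.map (ρ g).toLinearMap = W) :
    (⨆ χ : G →* ℂˣ, (W ⊓ eigSpace ρ χ)) = W := by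
  apply le_antisymm (iSup_le fun χ => inf_le_left)
  intro w hw
  have hmem : w ∈ ⨆ χ : G →* ℂˣ, eigSpace ρ χ := hspan.symm ▸ Submodule.mem_top
  obtain ⟨F, hF, hFsum⟩ := (Submodule.mem_iSup_iff_exists_finsupp _ _).mp hmem
  exact mem_iSup_inf_of_invariant ρ W hW F.support F (fun χ _ => hF χ) w hw
    (by rw [← hFsum]; rfl)

lemma iSup_inf_eig_eq (f : (G →* ℂˣ) → Submodule ℂ V)
    (hf : ∀ χ, f χ ≤ eigSpace ρ χ) (χ : G →* ℂˣ) :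
    (⨆ χ' : G →* ℂˣ, f χ') ⊓ eigSpace ρ χ = f χ := by
  classical
  apply le_antisymm
  · intro v hv
    obtain ⟨hv1, hv2⟩ := Submodule.mem_inf.mp hv
    obtain ⟨F, hF, hFsum⟩ := (Submodule.mem_iSup_iff_exists_finsupp _ _).mp hv1
    have hsum : v = ∑ χ' ∈ F.support, F χ' := by rw [← hFsum]; rfl
    have hkey : v - F χ = ∑ χ' ∈ F.support.erase χ, F χ' := by
      by_cases h : χ ∈ F.support
      · rw [hsum, ← Finset.add_sum_erase _ _ h]
        abel
      · rw [Finsupp.notMem_support_iff.mp h, Finset.erase_eq_of_notMem h, sub_zero, hsum]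
    have h0 := eig_vanish ρ (F.support.erase χ) χ (Finset.notMem_erase χ _) F
      (fun χ' h' => hf χ' (hF χ')) (v - F χ)
      (sub_mem hv2 (hf χ (hF χ))) hkey
    have : v = F χ := by rwa [sub_eq_zero] at h0
    rw [this]
    exact hF χ
  · exact le_inf (le_iSup f χ) (hf χ)

end Aux

/-- When the character eigenspaces span `V`, the `G`-invariant `n`-dimensional subspaces of
`V` are in bijection with families of subspaces of the eigenspaces with total dimension `n`;
the bijection is `W ↦ (χ ↦ W ⊓ V_χ)` with inverse `f ↦ ⨆ χ, f χ`. -/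
theorem invariant_subspaces_equiv_families
    {G V : Type*} [Group G] [AddCommGroup V] [Module ℂ V] [FiniteDimensional ℂ V]
    (ρ : G →* (V ≃ₗ[ℂ] V))
    (hspan : (⨆ χ : G →* ℂˣ, eigSpace ρ χ) = ⊤) (n : ℕ) :
    ∃ e : {W : Submodule ℂ V //
            (∀ g : G, W.map (ρ g).toLinearMap = W) ∧ Module.finrank ℂ W = n} ≃
          {f : (G →* ℂˣ) → Submodule ℂ V //
            (∀ χ, f χ ≤ eigSpace ρ χ) ∧ (∑ᶠ χ : G →* ℂˣ, Module.finrank ℂ (f χ)) = n},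
      (∀ W, (e W).val = fun χ => W.val ⊓ eigSpace ρ χ) ∧
        (∀ f, (e.symm f).val = ⨆ χ : G →* ℂˣ, f.val χ) := by
  classical
  refine ⟨⟨fun W => ⟨fun χ => W.val ⊓ eigSpace ρ χ, fun χ => inf_le_right, ?_⟩,
      fun f => ⟨⨆ χ : G →* ℂˣ, f.val χ, ?_, ?_⟩, ?_, ?_⟩, fun W => rfl, fun f => rfl⟩
  · rw [finsum_finrank_eq ρ _ (fun χ => inf_le_right),
      invariant_eq_iSup_inf ρ hspan W.val W.2.1]
    exact W.2.2
  · intro g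
    rw [Submodule.map_iSup]
    exact iSup_congr fun χ => map_eq_self_of_le_eig ρ (f.2.1 χ) g
  · rw [← finsum_finrank_eq ρ f.val f.2.1]
    exact f.2.2
  · intro W
    exact Subtype.ext (invariant_eq_iSup_inf ρ hspan W.val W.2.1)
  · intro f
    exact Subtype.ext (funext fun χ => iSup_inf_eig_eq ρ f.val f.2.1 χ)
end

section
/- Let V be a complex vector space of finite dimension m, and let f : ℕ → Submodule ℂ V be a complete flag: f is monotone and finrank (f j) = j for all j ≤ m (so f 0 = ⊥ and f m = ⊤). Let W be a subspace of V with finrank W = n (n ≤ m). Then there exists a unique function σ : Fin n → ℕ that is strictly increasing, satisfies 1 ≤ σ i ≤ m for all i, and satisfies finrank (W ⊓ f (σ i)) = i + 1 and finrank (W ⊓ f (σ i - 1)) = i for every i : Fin n. (That is, every n-plane W belongs to exactly one Schubert cell e(σ).) -/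
/-- Relative to a complete flag in an `m`-dimensional complex vector space `V`, every
`n`-dimensional subspace `W` belongs to exactly one Schubert cell: there is a unique strictly
increasing sequence `σ : Fin n → ℕ` with `1 ≤ σ i ≤ m` such that `dim (W ⊓ f (σ i)) = i + 1`
and `dim (W ⊓ f (σ i - 1)) = i` for all `i`. -/
theorem exists_unique_schubert_symbol
    {V : Type*} [AddCommGroup V] [Module ℂ V] [FiniteDimensional ℂ V]
    {m n : ℕ} (hm : Module.finrank ℂ V = m)
    (f : ℕ → Submodule ℂ V) (hmono : Monotone f)
    (hrank : ∀ j ≤ m, Module.finrank ℂ (f j) = j)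
    (W : Submodule ℂ V) (hW : Module.finrank ℂ W = n) (hnm : n ≤ m) :
    ∃! σ : Fin n → ℕ,
      StrictMono σ ∧ (∀ i : Fin n, 1 ≤ σ i ∧ σ i ≤ m) ∧
      ∀ i : Fin n,
        Module.finrank ℂ (W ⊓ f (σ i) : Submodule ℂ V) = (i : ℕ) + 1 ∧
        Module.finrank ℂ (W ⊓ f (σ i - 1) : Submodule ℂ V) = (i : ℕ) := by
  set g : ℕ → ℕ := fun j => Module.finrank ℂ (W ⊓ f j : Submodule ℂ V) with hg
  have gdef : ∀ j, g j = Module.finrank ℂ (W ⊓ f j : Submodule ℂ V) := fun _ => rfl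
  have gmono : Monotone g := fun a b hab =>
    Submodule.finrank_mono (inf_le_inf_left W (hmono hab))
  have g0 : g 0 = 0 := by
    have hf0 : f 0 = ⊥ := Submodule.finrank_eq_zero.mp (hrank 0 (Nat.zero_le m))
    rw [gdef, hf0, inf_bot_eq, finrank_bot]
  have gm : g m = n := by
    have hfm : f m = ⊤ :=
      Submodule.eq_top_of_finrank_eq (by rw [hrank m le_rfl, hm])
    rw [gdef, hfm, inf_top_eq, hW]
  -- the step lemma: g increases by at most 1 on [0, m]
  have step : ∀ j : ℕ, j + 1 ≤ m → g (j + 1) ≤ g j + 1 := by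
    intro j hj
    have key := Submodule.finrank_sup_add_finrank_inf_eq (W ⊓ f (j + 1)) (f j)
    have h1 : (W ⊓ f (j + 1)) ⊓ f j = W ⊓ f j := by
      rw [inf_assoc, inf_eq_right.mpr (hmono (Nat.le_succ j))]
    have h2 : (W ⊓ f (j + 1)) ⊔ f j ≤ f (j + 1) :=
      sup_le (inf_le_right) (hmono (Nat.le_succ j))
    have h3 : Module.finrank ℂ ((W ⊓ f (j + 1)) ⊔ f j : Submodule ℂ V)
        ≤ j + 1 := by
      calc Module.finrank ℂ ((W ⊓ f (j + 1)) ⊔ f j : Submodule ℂ V)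
          ≤ Module.finrank ℂ (f (j + 1)) := Submodule.finrank_mono h2
        _ = j + 1 := hrank _ hj
    rw [h1] at key
    have hfj : Module.finrank ℂ (f j) = j := hrank j (le_trans (Nat.le_succ j) hj)
    rw [gdef, gdef]
    omega
  -- existence of the first j where g j ≥ i + 1
  have hex : ∀ i : Fin n, ∃ j, (i : ℕ) + 1 ≤ g j := by
    intro i
    exact ⟨m, by have := i.isLt; omega⟩
  set σ : Fin n → ℕ := fun i => Nat.find (hex i) with hσ
  have hσdef : ∀ i, σ i = Nat.find (hex i) := fun _ => rfl
  have hσm : ∀ i, σ i ≤ m := by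
    intro i
    rw [hσdef]
    exact Nat.find_le (by have := i.isLt; omega)
  have hhigh : ∀ i : Fin n, (i : ℕ) + 1 ≤ g (σ i) := by
    intro i; rw [hσdef]; exact Nat.find_spec (hex i)
  have hσ1 : ∀ i, 1 ≤ σ i := by
    intro i
    by_contra h
    have h0 : σ i = 0 := by omega
    have := hhigh i
    rw [h0, g0] at this
    omega
  have hlow : ∀ i : Fin n, g (σ i - 1) ≤ (i : ℕ) := by
    intro i
    have h := Nat.find_min (hex i)
      (show σ i - 1 < Nat.find (hex i) by rw [← hσdef]; have := hσ1 i; omega)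
    omega
  have hexact : ∀ i : Fin n, g (σ i) = (i : ℕ) + 1 ∧ g (σ i - 1) = (i : ℕ) := by
    intro i
    have h1 := hσ1 i
    have h2 := hσm i
    have hs : σ i - 1 + 1 = σ i := by omega
    have hstep := step (σ i - 1) (by omega)
    rw [hs] at hstep
    have := hlow i
    have := hhigh i
    have := gmono (Nat.sub_le (σ i) 1)
    omega
  refine ⟨σ, ⟨?_, fun i => ⟨hσ1 i, hσm i⟩, fun i => ⟨(hexact i).1, (hexact i).2⟩⟩, ?_⟩
  · -- strict monotonicity
    intro i k hik
    by_contra h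
    push_neg at h
    have := gmono h
    have := (hexact i).1
    have := (hexact k).1
    have : (i : ℕ) < (k : ℕ) := hik
    omega
  · -- uniqueness
    intro τ ⟨_, hτb, hτd⟩
    funext i
    have hτ1 := (hτb i).1
    have hd1 : g (τ i) = (i : ℕ) + 1 := (hτd i).1
    have hd2 : g (τ i - 1) = (i : ℕ) := (hτd i).2
    have hs1 := (hexact i).1
    have hs2 := (hexact i).2
    rcases lt_trichotomy (τ i) (σ i) with h | h | h
    · have hle : τ i ≤ σ i - 1 := by have := hσ1 i; omega
      have := gmono hle
      omega
    · exact h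
    · have hle : σ i ≤ τ i - 1 := by omega
      have := gmono hle
      omega
end
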